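/- arXiv:1310.3490 — 4 statements merged into one kernel-verified Lean document; each statement's English description precedes it below -/
import Mathlib

section
/- For any integers a_1,...,a_k with all a_i >= 2 and any m >= 2, F_n applied to (a_1,...,a_k,2,2,...,2,m) (with n - k - 1 twos inserted) equals (m-1)*F_{n-1}(a_1,...,a_k,2,...,2) + F_k(a_1,...,a_{k-1},a_k - 1). -/
/-- `F [x_n, ..., x_1]` represents `F_n(x_1,...,x_n)` (arguments in reverse order),
defined by `F_1(x) = x` and
`F_{i+1}(x_1,...,x_{i+1}) = F_i(x_1,...,x_i - 1) + (x_{i+1}-1) * F_i(x_1,...,x_i)`. -/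
def F : List ℤ → ℤ
  | [] => 0
  | [x] => x
  | x :: y :: ys => F ((y - 1) :: ys) + (x - 1) * F (y :: ys)
termination_by l => l.length
decreasing_by all_goals simp

lemma F_one_cons (a : ℤ) (as : List ℤ) (t : ℕ) :
    F (1 :: (List.replicate t 2 ++ a :: as)) = F ((a - 1) :: as) := by
  induction t with
  | zero => simp [F]
  | succ s ih =>
      rw [List.replicate_succ, List.cons_append]
      show F (1 :: 2 :: (List.replicate s 2 ++ a :: as)) = _
      rw [F]
      simpa using ih

/-- For a tuple `(a_1,...,a_k, 2, ..., 2, m)` (with `t` twos inserted), all `a_i ≥ 2`,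
`m ≥ 2`: `F_n(a_1,...,a_k,2,...,2,m) = (m-1)·F_{n-1}(a_1,...,a_k,2,...,2) + F_k(a_1,...,a_k - 1)`.
Here arguments are listed in reverse order, so `a_k :: as` is `(a_1,...,a_k)` reversed. -/
theorem F_twos_block (a : ℤ) (as : List ℤ) (t : ℕ) (m : ℤ)
    (ha : 2 ≤ a) (has : ∀ x ∈ as, 2 ≤ x) (hm : 2 ≤ m) :
    F (m :: (List.replicate t 2 ++ a :: as)) =
      (m - 1) * F (List.replicate t 2 ++ a :: as) + F ((a - 1) :: as) := by
  cases t with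
  | zero => simp [F]; ring
  | succ s =>
      rw [List.replicate_succ, List.cons_append]
      show F (m :: 2 :: (List.replicate s 2 ++ a :: as)) = _
      rw [F]
      have h : (2 : ℤ) - 1 = 1 := by norm_num
      rw [h, F_one_cons]
      ring
end

section
/- For all positive integers i, j with i, j >= 1, the polynomial identity gamma_{i,j}(x_1,...,x_j) = x_j * gamma_{i-1,j-1}(x_1,...,x_{j-1}) + beta'_{i+1,j-1}(x_1,...,x_{j-2}) holds, where beta'_{i+1,j-1}(x_1,...,x_{j-2}) = beta_{i+1,j-1}(x_1,...,x_{j-2},1). -/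
/-- `Cset i j`: the set of `i`-element subsets `I ⊆ {1,...,j}` such that any two consecutive
elements of `I` differ by an odd number, and `j - max I` is even. -/
def Cset (i j : ℕ) : Finset (Finset ℕ) :=
  (Finset.Icc 1 j).powerset.filter fun I =>
    I.card = i ∧
    (∀ a ∈ I, ∀ b ∈ I, a < b → (∀ t ∈ Finset.Ioo a b, t ∉ I) → Odd (b - a)) ∧
    (∀ a ∈ I, (∀ b ∈ I, b ≤ a) → Even (j - a))

/-- `A_{i,j}`: members of `C_{i,j}` not containing `j`. -/
def Aset (i j : ℕ) : Finset (Finset ℕ) := (Cset i j).filter fun I => j ∉ I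

/-- `B_{i,j}`: members of `C_{i,j}` containing `j`. -/
def Bset (i j : ℕ) : Finset (Finset ℕ) := (Cset i j).filter fun I => j ∈ I

def gamma (i j : ℕ) (x : ℕ → ℤ) : ℤ := ∑ I ∈ Cset i j, ∏ t ∈ I, x t

def alpha (i j : ℕ) (x : ℕ → ℤ) : ℤ := ∑ I ∈ Aset i j, ∏ t ∈ I, x t

def beta (i j : ℕ) (x : ℕ → ℤ) : ℤ := ∑ I ∈ Bset i j, ∏ t ∈ I, x t

/-- `betaP i j` is `beta_{i,j}` with the last variable `x_j` specialized to `1`. -/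
def betaP (i j : ℕ) (x : ℕ → ℤ) : ℤ := beta i j (Function.update x j 1)

/-!
Adjoining a new maximum `m` to a set `I` keeps all old gaps and creates exactly one new gap,
`m - max I`. Hence `insert m I ∈ C_{i+1,j}` iff `I ∈ C_{i,m-1}` and `j - m` is even. With `m = j`
this identifies `B_{i,j}` with `C_{i-1,j-1}`. On `A_{i,j}` (for `i ≥ 1`) the parity of `j - max I`
forces `max I ≤ j - 2`, so `A_{i,j} = C_{i,j-2}`, which adjoining `m = j - 1` identifies with
`B_{i+1,j-1}`; there the factor `x_{j-1}` is specialized to `1`.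
-/

open Finset

def OddGaps (I : Finset ℕ) : Prop :=
  ∀ a ∈ I, ∀ b ∈ I, a < b → (∀ t ∈ Ioo a b, t ∉ I) → Odd (b - a)

section

variable {i j m : ℕ} {I : Finset ℕ}

lemma mem_Cset :
    I ∈ Cset i j ↔ I ⊆ Icc 1 j ∧ #I = i ∧ OddGaps I ∧
      ∀ a ∈ I, (∀ b ∈ I, b ≤ a) → Even (j - a) := by
  simp only [Cset, mem_filter, mem_powerset, OddGaps]

lemma mem_Icc_of_mem_Cset {a : ℕ} (hI : I ∈ Cset i j) (ha : a ∈ I) :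
    a ∈ Icc 1 j :=
  (mem_Cset.mp hI).1 ha

lemma gamma_eq_alpha_add_beta (x : ℕ → ℤ) : gamma i j x = alpha i j x + beta i j x := by
  rw [gamma, alpha, beta, Aset, Bset, add_comm, sum_filter_add_sum_filter_not]

lemma gamma_congr {x y : ℕ → ℤ} (h : ∀ t ∈ Icc 1 j, x t = y t) :
    gamma i j x = gamma i j y :=
  sum_congr rfl fun _ hI => prod_congr rfl fun _ ht => h _ (mem_Icc_of_mem_Cset hI ht)

lemma Cset_zero (hi : i ≠ 0) : Cset i 0 = ∅ := by
  ext I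
  simp only [mem_Cset, Icc_eq_empty_of_lt zero_lt_one, subset_empty, notMem_empty, iff_false]
  rintro ⟨rfl, hcard, -⟩
  exact hi hcard.symm

lemma forall_isMax_insert_iff (h : ∀ a ∈ I, a < m) (p : ℕ → Prop) :
    (∀ a ∈ insert m I, (∀ b ∈ insert m I, b ≤ a) → p a) ↔ p m := by
  refine ⟨fun hp => hp m (mem_insert_self m I) ?_, fun hm a ha hmax => ?_⟩
  · simp only [mem_insert, forall_eq_or_imp, le_refl, true_and]
    exact fun b hb => (h b hb).le
  · have ham : a ≤ m := (mem_insert.mp ha).elim le_of_eq fun ha => (h a ha).le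
    obtain rfl : a = m := le_antisymm ham (hmax m (mem_insert_self m I))
    exact hm

lemma oddGaps_insert_iff (h : ∀ a ∈ I, a < m) :
    OddGaps (insert m I) ↔ OddGaps I ∧ ∀ a ∈ I, (∀ b ∈ I, b ≤ a) → Odd (m - a) := by
  constructor
  · intro hgaps
    refine ⟨fun a ha b hb hab hfree => ?_, fun a ha hmax => ?_⟩
    · refine hgaps a (mem_insert_of_mem ha) b (mem_insert_of_mem hb) hab fun t ht htI => ?_
      rcases mem_insert.mp htI with rfl | htI
      · exact absurd (h b hb) (mem_Ioo.mp ht).2.not_gt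
      · exact hfree t ht htI
    · refine hgaps a (mem_insert_of_mem ha) m (mem_insert_self m I) (h a ha) fun t ht htI => ?_
      rcases mem_insert.mp htI with rfl | htI
      · exact (mem_Ioo.mp ht).2.false
      · exact (mem_Ioo.mp ht).1.not_ge (hmax t htI)
  · rintro ⟨hgaps, hlast⟩ a ha b hb hab hfree
    have hfree' : ∀ t ∈ Ioo a b, t ∉ I := fun t ht htI => hfree t ht (mem_insert_of_mem htI)
    rcases mem_insert.mp ha with rfl | haI
    · rcases mem_insert.mp hb with rfl | hb
      · exact absurd hab (lt_irrefl _)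
      · exact absurd (h b hb) hab.not_gt
    rcases mem_insert.mp hb with rfl | hbI
    · refine hlast a haI fun c hc => not_lt.mp fun hac => hfree' c ?_ hc
      exact mem_Ioo.mpr ⟨hac, h c hc⟩
    · exact hgaps a haI b hbI hab hfree'

lemma insert_mem_Cset_iff (h : ∀ a ∈ I, a < m) :
    insert m I ∈ Cset (i + 1) j ↔ (1 ≤ m ∧ m ≤ j ∧ Even (j - m)) ∧ I ∈ Cset i (m - 1) := by
  have hmI : m ∉ I := fun hm => (h m hm).false
  have hpar : ∀ a ∈ I, (Odd (m - a) ↔ Even (m - 1 - a)) := fun a ha => by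
    rw [Nat.odd_iff, Nat.even_iff]
    have := h a ha
    omega
  rw [mem_Cset, mem_Cset, insert_subset_iff, mem_Icc, card_insert_of_notMem hmI, add_left_inj,
    oddGaps_insert_iff h, forall_isMax_insert_iff h]
  constructor
  · rintro ⟨⟨⟨h1m, hmj⟩, hsub⟩, rfl, ⟨hgaps, hlast⟩, hjm⟩
    refine ⟨⟨h1m, hmj, hjm⟩, fun a ha => ?_, rfl, hgaps,
      fun a ha hmax => (hpar a ha).mp (hlast a ha hmax)⟩
    have := mem_Icc.mp (hsub ha)
    have := h a ha
    exact mem_Icc.mpr ⟨by omega, by omega⟩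
  · rintro ⟨⟨h1m, hmj, hjm⟩, hsub, rfl, hgaps, hlast⟩
    exact ⟨⟨⟨h1m, hmj⟩, hsub.trans (Icc_subset_Icc_right (by omega))⟩, rfl,
      ⟨hgaps, fun a ha hmax => (hpar a ha).mpr (hlast a ha hmax)⟩, hjm⟩

lemma Bset_succ_eq_image (hm : 1 ≤ m) :
    Bset (i + 1) m = (Cset i (m - 1)).image (insert m) := by
  ext J
  rw [Bset, mem_filter, mem_image]
  constructor
  · rintro ⟨hJ, hmJ⟩
    have hlt : ∀ a ∈ J.erase m, a < m := fun a ha =>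
      (mem_Icc.mp (mem_Icc_of_mem_Cset hJ (mem_of_mem_erase ha))).2.lt_of_ne (ne_of_mem_erase ha)
    rw [← insert_erase hmJ, insert_mem_Cset_iff hlt] at hJ
    exact ⟨J.erase m, hJ.2, insert_erase hmJ⟩
  · rintro ⟨I, hI, rfl⟩
    have hlt : ∀ a ∈ I, a < m := fun a ha => by
      have := mem_Icc.mp (mem_Icc_of_mem_Cset hI ha)
      omega
    exact ⟨(insert_mem_Cset_iff hlt).mpr ⟨⟨hm, le_rfl, by simp⟩, hI⟩, mem_insert_self m I⟩

lemma beta_succ (hm : 1 ≤ m) (x : ℕ → ℤ) :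
    beta (i + 1) m x = x m * gamma i (m - 1) x := by
  have hmI : ∀ I ∈ Cset i (m - 1), m ∉ I := fun I hI hmI => by
    have := mem_Icc.mp (mem_Icc_of_mem_Cset hI hmI)
    omega
  rw [beta, Bset_succ_eq_image hm, sum_image, gamma, mul_sum]
  · exact sum_congr rfl fun I hI => prod_insert (hmI I hI)
  · intro I₁ h₁ I₂ h₂ heq
    rw [← erase_insert (hmI I₁ h₁), ← erase_insert (hmI I₂ h₂)]
    exact congrArg (·.erase m) heq

lemma betaP_succ (hi : i ≠ 0) (m : ℕ) (x : ℕ → ℤ) :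
    betaP (i + 1) m x = gamma i (m - 1) x := by
  cases m with
  | zero => simp [betaP, beta, Bset, gamma, Cset_zero, hi]
  | succ m =>
    rw [betaP, beta_succ m.succ_pos, Function.update_self, one_mul, Nat.add_sub_cancel]
    refine gamma_congr fun t ht => Function.update_of_ne ?_ _ _
    have := mem_Icc.mp ht
    omega

lemma Aset_succ : Aset (i + 1) j = Cset (i + 1) (j - 2) := by
  ext I
  induction I using Finset.induction_on_max with
  | empty => simp [Aset, mem_Cset]
  | insert m I hlt _ =>
    rw [Aset, mem_filter, insert_mem_Cset_iff hlt, insert_mem_Cset_iff hlt, mem_insert, not_or]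
    constructor
    · rintro ⟨⟨⟨h1m, hmj, hjm⟩, hI⟩, hjne, -⟩
      rw [Nat.even_iff] at hjm ⊢
      exact ⟨⟨h1m, by omega, by omega⟩, hI⟩
    · rintro ⟨⟨h1m, hmj, hjm⟩, hI⟩
      rw [Nat.even_iff] at hjm ⊢
      exact ⟨⟨⟨h1m, by omega, by omega⟩, hI⟩, by omega, fun hj => by have := hlt j hj; omega⟩

end

theorem gamma_recurrence (i j : ℕ) (hi : 1 ≤ i) (hj : 1 ≤ j) (x : ℕ → ℤ) :
    gamma i j x = x j * gamma (i - 1) (j - 1) x + betaP (i + 1) (j - 1) x := by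
  obtain ⟨k, rfl⟩ : ∃ k, i = k + 1 := ⟨i - 1, by omega⟩
  rw [gamma_eq_alpha_add_beta, alpha, Aset_succ, ← gamma, beta_succ hj,
    betaP_succ k.succ_ne_zero, Nat.sub_sub, Nat.add_sub_cancel, add_comm]
end

section
/- Let M be the k×k integer tridiagonal matrix with diagonal entries h_1,...,h_k and all sub- and super-diagonal entries equal to 1. Define r_1 = h_1, r_2 = 1 - r_1 h_2, and r_i = -r_{i-1} h_i - r_{i-2} for 3 ≤ i ≤ k. Then the Smith normal form of M is the diagonal matrix diag(1, 1, ..., 1, ±r_k); equivalently, M is equivalent over ℤ to diag(1,...,1,r_k) up to sign. -/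
/-- The `k×k` symmetric tridiagonal integer matrix with diagonal `h 1, ..., h k` and
sub/super-diagonal entries `1`. -/
def Mtri (h : ℕ → ℤ) (k : ℕ) : Matrix (Fin k) (Fin k) ℤ :=
  fun i j =>
    if i = j then h (i.val + 1)
    else if i.val + 1 = j.val ∨ j.val + 1 = i.val then 1 else 0

/-- `r h : r 1 = h 1`, `r 2 = 1 - r 1 * h 2`, `r i = -r (i-1) * h i - r (i-2)`
(with the convention `r 0 = -1`, which makes the last clause uniform). -/
def r (h : ℕ → ℤ) : ℕ → ℤ
  | 0 => -1
  | 1 => h 1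
  | n + 2 => -(r h (n + 1)) * h (n + 2) - r h n

/-!
The vector `w = (-r h 0, …, -r h (k - 1))` has `w 0 = 1`, and the recursion defining `r` says
exactly that `M w = r h k • e_k`. The minor of `M` deleting the last row and the first column is
lower unitriangular. Rotating the first column to the end makes that minor the leading block, and
block elimination against it leaves the Schur complement, which `w` identifies as `r h k`.
-/

namespace Matrix

variable {l m n o R : Type*} [Fintype l] [DecidableEq l] [Fintype m] [DecidableEq m]
  [Fintype n] [DecidableEq n] [Fintype o] [DecidableEq o] [CommRing R]

def Equivalent (M N : Matrix m n R) : Prop :=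
  ∃ P : Matrix m m R, ∃ Q : Matrix n n R, IsUnit P.det ∧ IsUnit Q.det ∧ P * M * Q = N

theorem Equivalent.trans {M N L : Matrix m n R} (h₁ : M.Equivalent N) (h₂ : N.Equivalent L) :
    M.Equivalent L := by
  obtain ⟨P, Q, hP, hQ, rfl⟩ := h₁
  obtain ⟨P', Q', hP', hQ', rfl⟩ := h₂
  refine ⟨P' * P, Q * Q', ?_, ?_, ?_⟩
  · simpa only [det_mul] using hP'.mul hP
  · simpa only [det_mul] using hQ.mul hQ'
  · simp only [Matrix.mul_assoc]

theorem Equivalent.submatrix {M N : Matrix m n R} (hMN : M.Equivalent N) (e : l ≃ m)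
    (f : o ≃ n) :
    (M.submatrix e f).Equivalent (N.submatrix e f) := by
  obtain ⟨P, Q, hP, hQ, rfl⟩ := hMN
  refine ⟨P.submatrix e e, Q.submatrix f f, by rwa [det_submatrix_equiv_self],
    by rwa [det_submatrix_equiv_self], ?_⟩
  rw [submatrix_mul_equiv _ _ _ e, submatrix_mul_equiv _ _ _ f]

theorem equivalent_submatrix_self (M : Matrix m n R) (e : Equiv.Perm m) (f : Equiv.Perm n) :
    M.Equivalent (M.submatrix e f) := by
  refine ⟨e.permMatrix R, Equiv.Perm.permMatrix R f⁻¹, ?_, ?_, ?_⟩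
  · rw [det_permutation]
    exact (Equiv.Perm.sign e).isUnit.map (Int.castRingHom R)
  · rw [det_permutation]
    exact (Equiv.Perm.sign f⁻¹).isUnit.map (Int.castRingHom R)
  · rw [PEquiv.toMatrix_toPEquiv_mul, PEquiv.mul_toMatrix_toPEquiv]
    rfl

theorem fromBlocks_equivalent_of_mul_add_eq_zero {A : Matrix m m R} {B : Matrix m n R}
    (C : Matrix n m R) (D : Matrix n n R) {X : Matrix m n R} (hA : IsUnit A.det)
    (hX : A * X + B = 0) :
    (fromBlocks A B C D).Equivalent (fromBlocks 1 0 0 (D + C * X)) := by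
  refine ⟨fromBlocks A⁻¹ 0 (-(C * A⁻¹)) 1, fromBlocks 1 X 0 1, ?_, ?_, ?_⟩
  · simpa [det_fromBlocks_zero₁₂] using isUnit_nonsing_inv_det A hA
  · simp
  · obtain rfl : B = -(A * X) := eq_neg_of_add_eq_zero_right hX
    have hCA : C * A⁻¹ * A = C := by rw [Matrix.mul_assoc, nonsing_inv_mul _ hA, Matrix.mul_one]
    simp [fromBlocks_multiply, ← Matrix.mul_assoc, nonsing_inv_mul _ hA, hCA, add_comm]

theorem equivalent_diagonal_of_mulVec_eq_single_last {n : ℕ}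
    (M : Matrix (Fin (n + 1)) (Fin (n + 1)) R) (v : Fin (n + 1) → R) (s : R)
    (hA : IsUnit (M.submatrix Fin.castSucc Fin.castSucc).det) (hv : v (Fin.last n) = 1)
    (hMv : M *ᵥ v = Pi.single (Fin.last n) s) :
    M.Equivalent (diagonal fun i => if i = Fin.last n then s else 1) := by
  let e : Fin n ⊕ Fin 1 ≃ Fin (n + 1) := finSumFinEquiv
  set N := M.submatrix e e
  have hrow (i : Fin (n + 1)) : ∑ j : Fin n, M i j.castSucc * v j.castSucc + M i (Fin.last n) =
      (Pi.single (Fin.last n) s : Fin (n + 1) → R) i := by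
    rw [← hMv, mulVec, dotProduct, Fin.sum_univ_castSucc, hv, mul_one]
  have hinl (i : Fin n) : e (.inl i) = i.castSucc := rfl
  have hinr (i : Fin 1) : e (.inr i) = Fin.last n := Fin.ext (by simp [e])
  let X : Matrix (Fin n) (Fin 1) R := of fun i _ => v i.castSucc
  have hX : N.toBlocks₁₁ * X + N.toBlocks₁₂ = 0 := by
    ext i j
    simpa [N, X, hinl, hinr, toBlocks₁₁, toBlocks₁₂, mul_apply, Fin.castSucc_ne_last]
      using hrow i.castSucc
  have hS : N.toBlocks₂₂ + N.toBlocks₂₁ * X = diagonal fun _ => s := by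
    ext i j
    obtain rfl := Subsingleton.elim i j
    simpa [N, X, hinl, hinr, toBlocks₂₁, toBlocks₂₂, mul_apply, add_comm]
      using hrow (Fin.last n)
  have hN := fromBlocks_equivalent_of_mul_add_eq_zero N.toBlocks₂₁ N.toBlocks₂₂
    (show IsUnit N.toBlocks₁₁.det from hA) hX
  rw [fromBlocks_toBlocks, hS, ← diagonal_one, fromBlocks_diagonal] at hN
  convert hN.submatrix e.symm e.symm using 1
  · simp [N]
  · rw [submatrix_diagonal_equiv]
    congr 1
    ext i
    induction i using Fin.lastCases <;> simp [e, Fin.castSucc_ne_last]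

theorem equivalent_diagonal_of_mulVec_eq_single {n : ℕ}
    (M : Matrix (Fin (n + 1)) (Fin (n + 1)) R) (v : Fin (n + 1) → R) (s : R)
    (hA : IsUnit (M.submatrix Fin.castSucc Fin.succ).det) (hv : v 0 = 1)
    (hMv : M *ᵥ v = Pi.single (Fin.last n) s) :
    M.Equivalent (diagonal fun i => if i = Fin.last n then s else 1) := by
  let σ := finRotate (n + 1)
  refine (equivalent_submatrix_self M (Equiv.refl _) σ).trans
    (equivalent_diagonal_of_mulVec_eq_single_last _ (v ∘ σ) s ?_ (by simpa [σ]) ?_)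
  · have hσ (i : Fin n) : σ i.castSucc = i.succ :=
      Fin.ext (by simp [σ])
    convert hA using 2
    ext i j
    simp [hσ]
  · rw [submatrix_mulVec_equiv, Function.comp_assoc, Equiv.self_comp_symm]
    exact hMv

end Matrix

open Matrix

theorem Mtri_mulVec_neg_r (h : ℕ → ℤ) (n : ℕ) :
    Mtri h (n + 1) *ᵥ (fun j => -r h j) = Pi.single (Fin.last n) (r h (n + 1)) := by
  ext i
  have hsum : (Mtri h (n + 1) *ᵥ fun j => -r h j) i = ∑ j ∈ Finset.range (n + 1),
      ((if j = i then -(h (i + 1) * r h i) else 0) + (if j = i + 1 then -r h j else 0) +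
        (if j + 1 = i then -r h j else 0)) := by
    rw [mulVec, dotProduct, ← Fin.sum_univ_eq_sum_range]
    refine Finset.sum_congr rfl fun j _ => ?_
    simp only [Mtri, Fin.ext_iff]
    split_ifs <;> first | omega | simp_all
  rw [hsum, Finset.sum_add_distrib, Finset.sum_add_distrib, Finset.sum_ite_eq',
    Finset.sum_ite_eq']
  obtain ⟨i, hi⟩ := i
  rcases i with _ | i
  · rcases n with _ | n <;> simp [Fin.ext_iff, r]
  · simp only [Finset.mem_range, add_left_inj, Finset.sum_ite_eq', Pi.single_apply, Fin.ext_iff,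
      Fin.val_last]
    have hr : r h (i + 2) = -r h (i + 1) * h (i + 2) - r h i := rfl
    rw [if_pos hi, if_pos (by omega : i < n + 1)]
    split_ifs <;> first | omega | (subst_vars; linear_combination -hr)

theorem det_Mtri_submatrix_castSucc_succ (h : ℕ → ℤ) (n : ℕ) :
    ((Mtri h (n + 1)).submatrix Fin.castSucc Fin.succ).det = 1 := by
  rw [det_of_isLowerTriangular]
  · simp [Mtri, Fin.ext_iff]
  · intro i j hij
    have : (i : ℕ) < j := hij
    simp only [submatrix_apply, Mtri, Fin.ext_iff, Fin.val_succ, Fin.val_castSucc]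
    split_ifs <;> omega

/-- The Smith normal form of the tridiagonal matrix `Mtri h k` is `diag(1,...,1, ±r_k)`:
`Mtri h k` is equivalent over `ℤ` (via invertible integer row and column operations) to that
diagonal matrix. -/
theorem smithNormalForm_tridiagonal (k : ℕ) (hk : 1 ≤ k) (h : ℕ → ℤ) :
    ∃ P Q : Matrix (Fin k) (Fin k) ℤ, IsUnit P.det ∧ IsUnit Q.det ∧
      ∃ ε : ℤ, (ε = 1 ∨ ε = -1) ∧
        P * Mtri h k * Q =
          Matrix.diagonal fun i : Fin k => if i.val = k - 1 then ε * r h k else 1 := by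
  obtain ⟨n, rfl⟩ : ∃ n, k = n + 1 := ⟨k - 1, by omega⟩
  obtain ⟨P, Q, hP, hQ, hPQ⟩ := (Mtri h (n + 1)).equivalent_diagonal_of_mulVec_eq_single _ _
    (by rw [det_Mtri_submatrix_castSucc_succ]; exact isUnit_one) (by simp [r])
    (Mtri_mulVec_neg_r h n)
  refine ⟨P, Q, hP, hQ, 1, Or.inl rfl, ?_⟩
  rw [hPQ]
  congr 1
  ext i
  simp [Fin.ext_iff]
end

section
/- For the recursively defined F_n with F_1(x)=x and F_{i+1}(x_1,...,x_{i+1}) = F_i(x_1,...,x_i - 1) + (x_{i+1}-1)*F_i(x_1,...,x_i), the value F_n(a_1,...,a_n) is symmetric under reversal of the arguments: F_n(a_1,...,a_n) = F_n(a_n,...,a_1) for all integers a_1,...,a_n. -/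
lemma F_key : ∀ (m : List ℤ) (x y : ℤ),
    F (m ++ [y, x]) = F (m ++ [y - 1]) + (x - 1) * F (m ++ [y])
  | [], x, y => by simp [F]; ring
  | [a], x, y => by simp [F]; ring
  | a :: b :: m, x, y => by
    have h1 := F_key ((b - 1) :: m) x y
    have h2 := F_key (b :: m) x y
    simp only [List.cons_append] at h1 h2 ⊢
    rw [show F (a :: b :: (m ++ [y, x])) =
        F ((b - 1) :: (m ++ [y, x])) + (a - 1) * F (b :: (m ++ [y, x])) from by rw [F],
      show F (a :: b :: (m ++ [y - 1])) =
        F ((b - 1) :: (m ++ [y - 1])) + (a - 1) * F (b :: (m ++ [y - 1])) from by rw [F],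
      show F (a :: b :: (m ++ [y])) =
        F ((b - 1) :: (m ++ [y])) + (a - 1) * F (b :: (m ++ [y])) from by rw [F],
      h1, h2]
    ring
termination_by m => m.length

theorem F_reverse (l : List ℤ) (hl : l ≠ []) : F l = F l.reverse := by
  match l with
  | [x] => simp
  | x :: y :: ys =>
    have h1 := F_reverse ((y - 1) :: ys) (by simp)
    have h2 := F_reverse (y :: ys) (by simp)
    rw [show F (x :: y :: ys) = F ((y - 1) :: ys) + (x - 1) * F (y :: ys) from by rw [F],
      h1, h2]
    simp only [List.reverse_cons, List.append_assoc, List.singleton_append,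
      List.nil_append]
    rw [← F_key]
termination_by l.length
end
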